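/- arXiv:1312.5019 — 2 statements merged into one kernel-verified Lean document; each statement's English description precedes it below -/
import Mathlib

section
/- Let f be the inverse of v(x) = sgn(x)·√(x - ln(1+x)) on (-1,∞), and define y(v) = v/f(v) for v ≠ 0 and y(0) = √2/2. Then y is continuous on ℝ. -/
/-!
Write `v x = sign x * √(x - log (1 + x))`. The gap `x - log (1 + x)` lies above its tangent
lines (this is `log y < y - 1`), so it decreases on `(-1, 0]` and increases on `[0, ∞)`; hence
`v` is strictly increasing on `(-1, ∞)` and its left inverse `f` is a monotone map onto the open
set `(-1, ∞)`, which forces `f` to be continuous with `f 0 = 0`. Away from `0` the function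
`v / f v` is then continuous. At `0`, l'Hôpital gives `(x - log (1 + x)) / x² → 1 / 2`, so
`v x / x = √((x - log (1 + x)) / x²) → √2 / 2`, and composing with `f` gives
`v / f v = v (f v) / f v → √2 / 2`.
-/

open Real Set Filter Topology Function

theorem StrictMonoOn.continuous_of_leftInverse {α β : Type*} [LinearOrder α]
    [TopologicalSpace α] [OrderTopology α] [LinearOrder β] [TopologicalSpace β]
    [OrderTopology β] [DenselyOrdered β]
    {g : β → α} {f : α → β} {s : Set β} (hg : StrictMonoOn g s) (hs : IsOpen s)
    (hfs : ∀ x, f x ∈ s) (hgf : LeftInverse g f) : Continuous f := by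
  have hmono : Monotone f := fun a b hab =>
    (hg.le_iff_le (hfs a) (hfs b)).1 (by rwa [hgf a, hgf b])
  have hrange : range f = s :=
    (range_subset_iff.2 hfs).antisymm fun y hy => ⟨g y, hg.injOn (hfs _) hy (hgf (g y))⟩
  refine continuous_iff_continuousAt.2 fun a =>
    continuousAt_of_monotoneOn_of_image_mem_nhds (hmono.monotoneOn univ) univ_mem ?_
  rw [image_univ, hrange]
  exact hs.mem_nhds (hfs a)

noncomputable def logGap (x : ℝ) : ℝ := x - log (1 + x)

theorem hasDerivAt_logGap {x : ℝ} (hx : -1 < x) : HasDerivAt logGap (x / (1 + x)) x := by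
  have h1 : 1 + x ≠ 0 := by linarith
  have h := (hasDerivAt_id' x).sub (((hasDerivAt_id' x).const_add 1).log h1)
  rwa [one_sub_div h1, add_sub_cancel_left] at h

theorem logGap_tangent_lt {a b : ℝ} (ha : -1 < a) (hb : -1 < b) (hab : a ≠ b) :
    logGap b + b / (1 + b) * (a - b) < logGap a := by
  have ha' : 0 < 1 + a := by linarith
  have hb' : 0 < 1 + b := by linarith
  have hlog : log ((1 + a) / (1 + b)) < (1 + a) / (1 + b) - 1 :=
    log_lt_sub_one_of_pos (div_pos ha' hb') fun h => hab (by
      rw [div_eq_one_iff_eq hb'.ne'] at h; linarith)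
  rw [log_div ha'.ne' hb'.ne'] at hlog
  have hquot : (1 + a) / (1 + b) - 1 = (a - b) / (1 + b) := by field_simp; ring
  have htangent : b / (1 + b) * (a - b) = (a - b) - (a - b) / (1 + b) := by field_simp; ring
  rw [hquot] at hlog
  rw [htangent]
  unfold logGap
  linarith

theorem mapsTo_logGap : MapsTo logGap (Ioi (-1)) (Ici 0) := fun x (hx : -1 < x) => by
  have hlog := log_le_sub_one_of_pos (by linarith : 0 < 1 + x)
  simp only [logGap, mem_Ici]
  linarith

theorem logGap_strictMonoOn : StrictMonoOn logGap (Ici 0) := by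
  intro a (ha : 0 ≤ a) b (hb : 0 ≤ b) hab
  have htangent := logGap_tangent_lt (by linarith) (by linarith) hab.ne'
  have hslope : 0 ≤ a / (1 + a) * (b - a) :=
    mul_nonneg (div_nonneg ha (by linarith)) (by linarith)
  linarith

theorem logGap_strictAntiOn : StrictAntiOn logGap (Ioc (-1) 0) := by
  intro a ha b hb hab
  have htangent := logGap_tangent_lt ha.1 hb.1 hab.ne
  have hslope : 0 ≤ b / (1 + b) * (a - b) :=
    mul_nonneg_of_nonpos_of_nonpos (div_nonpos_of_nonpos_of_nonneg hb.2 (by linarith [hb.1]))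
      (by linarith)
  linarith

/-- The function `v` of the paper. -/
noncomputable def signedSqrtLogGap (x : ℝ) : ℝ := sign x * √(logGap x)

theorem signedSqrtLogGap_of_nonneg {x : ℝ} (hx : 0 ≤ x) :
    signedSqrtLogGap x = √(logGap x) := by
  rcases hx.lt_or_eq with hx | rfl
  · simp [signedSqrtLogGap, sign_of_pos hx]
  · simp [signedSqrtLogGap, logGap]

theorem signedSqrtLogGap_of_nonpos {x : ℝ} (hx : x ≤ 0) :
    signedSqrtLogGap x = -√(logGap x) := by
  rcases hx.lt_or_eq with hx | rfl
  · simp [signedSqrtLogGap, sign_of_neg hx]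
  · simp [signedSqrtLogGap, logGap]

theorem signedSqrtLogGap_strictMonoOn : StrictMonoOn signedSqrtLogGap (Ioi (-1)) := by
  have hneg : StrictMonoOn signedSqrtLogGap (Ioc (-1) 0) :=
    (strictMonoOn_sqrt.comp_strictAntiOn logGap_strictAntiOn
      (mapsTo_logGap.mono_left Ioc_subset_Ioi_self)).neg.congr
      fun x hx => (signedSqrtLogGap_of_nonpos hx.2).symm
  have hpos : StrictMonoOn signedSqrtLogGap (Ici 0) :=
    (strictMonoOn_sqrt.comp logGap_strictMonoOn
      (mapsTo_logGap.mono_left (Ici_subset_Ioi.2 (by norm_num)))).congr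
      fun x hx => (signedSqrtLogGap_of_nonneg hx).symm
  rw [← Ioc_union_Ici_eq_Ioi (by norm_num : (-1 : ℝ) < 0)]
  exact hneg.union hpos ⟨⟨by norm_num, le_rfl⟩, fun x hx => hx.2⟩
    ⟨self_mem_Ici, fun x hx => hx⟩

theorem tendsto_logGap_div_sq :
    Tendsto (fun x => logGap x / x ^ 2) (𝓝[≠] 0) (𝓝 (1 / 2)) := by
  have hnear : ∀ᶠ x in 𝓝[≠] (0 : ℝ), -1 < x :=
    eventually_nhdsWithin_of_eventually_nhds (eventually_gt_nhds (by norm_num))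
  refine HasDerivAt.lhopital_zero_nhdsNE (hnear.mono fun x hx => hasDerivAt_logGap hx)
    (Eventually.of_forall fun x => by simpa using hasDerivAt_pow 2 x)
    (eventually_mem_nhdsWithin.mono fun x (hx : x ≠ 0) => by simpa using hx) ?_ ?_ ?_
  · have h0 := (hasDerivAt_logGap (by norm_num : (-1 : ℝ) < 0)).continuousAt.tendsto
    simpa [logGap] using h0.mono_left nhdsWithin_le_nhds
  · simpa using ((continuous_pow 2).tendsto (0 : ℝ)).mono_left nhdsWithin_le_nhds
  · have hcont : ContinuousAt (fun x : ℝ => 1 / (2 * (1 + x))) 0 := by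
      fun_prop (disch := norm_num)
    have hlim : Tendsto (fun x : ℝ => 1 / (2 * (1 + x))) (𝓝 0) (𝓝 (1 / 2)) := by
      simpa using hcont.tendsto
    refine (hlim.mono_left nhdsWithin_le_nhds).congr' ?_
    filter_upwards [self_mem_nhdsWithin] with x (hx : x ≠ 0)
    field_simp

theorem signedSqrtLogGap_div_self (x : ℝ) : signedSqrtLogGap x / x = √(logGap x / x ^ 2) := by
  rw [sqrt_div' _ (sq_nonneg x), sqrt_sq_eq_abs, signedSqrtLogGap]
  rcases lt_trichotomy x 0 with hx | rfl | hx
  · rw [sign_of_neg hx, abs_of_neg hx]; ring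
  · simp
  · rw [sign_of_pos hx, abs_of_pos hx]; ring

theorem tendsto_signedSqrtLogGap_div_self :
    Tendsto (fun x => signedSqrtLogGap x / x) (𝓝[≠] 0) (𝓝 (√2 / 2)) := by
  have : √(1 / 2 : ℝ) = √2 / 2 := by
    rw [sqrt_div' 1 zero_le_two, sqrt_one, eq_div_iff two_ne_zero, div_mul_eq_mul_div, one_mul,
      div_sqrt]
  simp_rw [signedSqrtLogGap_div_self, ← this]
  exact (continuous_sqrt.tendsto _).comp tendsto_logGap_div_sq

theorem stmt_5 (f : ℝ → ℝ)
    (hf : ∀ u : ℝ, f u ∈ Set.Ioi (-1 : ℝ) ∧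
      Real.sign (f u) * Real.sqrt (f u - Real.log (1 + f u)) = u) :
    Continuous (fun v : ℝ => if v = 0 then Real.sqrt 2 / 2 else v / f v) := by
  have hgf : LeftInverse signedSqrtLogGap f := fun u => (hf u).2
  have hcont : Continuous f :=
    signedSqrtLogGap_strictMonoOn.continuous_of_leftInverse isOpen_Ioi (fun u => (hf u).1) hgf
  have hf0 : f 0 = 0 := signedSqrtLogGap_strictMonoOn.injOn (hf 0).1
    (by norm_num : (0 : ℝ) ∈ Ioi (-1)) (by rw [hgf 0]; simp [signedSqrtLogGap])
  have hf_ne : ∀ v ≠ 0, f v ≠ 0 := fun v hv => by simpa [hf0] using hgf.injective.ne hv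
  have hf_punctured : Tendsto f (𝓝[≠] 0) (𝓝[≠] 0) :=
    tendsto_nhdsWithin_of_tendsto_nhds_of_eventually_within f
      ((hcont.tendsto' 0 0 hf0).mono_left nhdsWithin_le_nhds)
      (eventually_mem_nhdsWithin.mono hf_ne)
  have hlim : Tendsto (fun v => v / f v) (𝓝[≠] 0) (𝓝 (√2 / 2)) := by
    simpa only [comp_def, hgf _] using tendsto_signedSqrtLogGap_div_self.comp hf_punctured
  have hupdate : (fun v : ℝ => if v = 0 then √2 / 2 else v / f v) =
      update (fun v => v / f v) 0 (√2 / 2) := by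
    funext v
    simp [update_apply]
  rw [hupdate, continuous_iff_continuousAt]
  intro a
  rcases eq_or_ne a 0 with rfl | ha
  · exact continuousAt_update_same.2 hlim
  · exact (continuousAt_update_of_ne ha).2
      (continuousAt_id.div hcont.continuousAt (hf_ne a ha))
end

section
/- As s → +∞, Γ(s+1) = (s/e)^s √(2πs) · [1 + 1/(12s) + 1/(288s²) - 139/(51840s³) - 571/(2488320s⁴) + 163879/(209018880s⁵) + o(1/s⁵)]. -/
/-!
Write `Γ(x + 1) = (x / e) ^ x √(2πx) · exp (E x)`. The error `E` satisfies the difference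
equation `E x - E (x + 1) = (x + 1/2) log (1 + 1/x) - 1`, and `E (x + n) → 0` as `n → ∞`: at
integers this is Stirling's formula for `n!`, and Gauss's limit `Γ(x + n + 1) ~ n! n ^ x` carries
it over to `x + n`. The truncated Stirling series `ψ x = 1/(12x) - 1/(360x³) + 1/(1260x⁵)` solves
the same difference equation up to `O(x⁻⁸)`, so summing the telescoping series gives
`E x = ψ x + O(x⁻⁷)`. The coefficients of the statement are those of the expansion of `exp (ψ x)`
in powers of `1/x`.
-/

open Real Filter Asymptotics Topology Finset

theorem abs_log_add_one_sub_log_sub_sum_le {x : ℝ} (hx : 0 < x) (n : ℕ) :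
    |log (x + 1) - log x - ∑ i ∈ range n, (x + 1)⁻¹ ^ (i + 1) / (i + 1)| ≤
      1 / (x * (x + 1) ^ n) := by
  have hx1 : 0 < x + 1 := by linarith
  have hz : |(x + 1)⁻¹| < 1 := by
    rw [abs_of_pos (inv_pos.mpr hx1)]
    exact inv_lt_one_of_one_lt₀ (by linarith)
  have h1z : 1 - (x + 1)⁻¹ = x / (x + 1) := by field_simp; ring
  have h := abs_log_sub_add_sum_range_le hz n
  rw [abs_of_pos (inv_pos.mpr hx1), h1z, log_div hx.ne' hx1.ne'] at h
  rw [← abs_neg]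
  convert h using 1
  · ring_nf
  · rw [inv_pow]
    field_simp
    ring

theorem natCast_div_pow_succ_le_sub {y : ℝ} (hy : 0 < y) (p : ℕ) :
    p / (y + 1) ^ (p + 1) ≤ 1 / y ^ p - 1 / (y + 1) ^ p := by
  have hbernoulli : y ^ p * (y + 1 + p) ≤ (y + 1) ^ (p + 1) :=
    calc y ^ p * (y + 1 + p) = (1 + (p + 1 : ℕ) * y⁻¹) * y ^ (p + 1) := by
          field_simp; push_cast; ring
      _ ≤ (1 + y⁻¹) ^ (p + 1) * y ^ (p + 1) := by
          gcongr
          exact one_add_mul_le_pow (by linarith [inv_pos.mpr hy]) _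
      _ = (y + 1) ^ (p + 1) := by rw [← mul_pow]; field_simp
  rw [div_sub_div _ _ (by positivity) (by positivity),
    div_le_div_iff₀ (by positivity) (by positivity)]
  have hscaled := mul_le_mul_of_nonneg_left hbernoulli (pow_pos (show 0 < y + 1 by linarith) p).le
  rw [pow_succ] at hscaled ⊢
  nlinarith

theorem natCast_mul_sum_range_le {x : ℝ} (hx : 0 < x) (p n : ℕ) :
    p * ∑ k ∈ range n, 1 / (x + k + 1) ^ (p + 1) ≤ 1 / x ^ p := by
  have htel := sum_range_sub' (fun k : ℕ => 1 / (x + k) ^ p) n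
  calc p * ∑ k ∈ range n, 1 / (x + k + 1) ^ (p + 1)
      = ∑ k ∈ range n, p / (x + k + 1) ^ (p + 1) := by
        rw [mul_sum]; simp only [mul_one_div]
    _ ≤ ∑ k ∈ range n, (1 / (x + k) ^ p - 1 / (x + (k + 1 : ℕ)) ^ p) := by
        gcongr with k
        rw [Nat.cast_succ, ← add_assoc]
        exact natCast_div_pow_succ_le_sub (by positivity) p
    _ = 1 / x ^ p - 1 / (x + n) ^ p := by simpa using htel
    _ ≤ 1 / x ^ p := by
        have : 0 ≤ 1 / (x + n) ^ p := by positivity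
        linarith

theorem abs_le_of_tendsto_add_natCast {g : ℝ → ℝ} {x B : ℝ} {b : ℕ → ℝ}
    (hg : Tendsto (fun n : ℕ => g (x + n)) atTop (𝓝 0))
    (hstep : ∀ k : ℕ, |g (x + k) - g (x + k + 1)| ≤ b k) (hsum : ∀ n, ∑ k ∈ range n, b k ≤ B) :
    |g x| ≤ B := by
  have hlim : Tendsto (fun n : ℕ => |g x - g (x + n)|) atTop (𝓝 |g x|) := by
    simpa using (tendsto_const_nhds.sub hg).abs
  refine le_of_tendsto' hlim fun n => ?_
  have htel := sum_range_sub' (fun k : ℕ => g (x + k)) n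
  simp only [Nat.cast_add, Nat.cast_one, Nat.cast_zero, add_zero, ← add_assoc] at htel
  rw [← htel]
  exact (abs_sum_le_sum_abs _ _).trans ((sum_le_sum fun k _ => hstep k).trans (hsum n))

theorem isBigO_exp_sub_exp {α : Type*} {l : Filter α} {f g : α → ℝ} {c : ℝ}
    (hg : Tendsto g l (𝓝 c)) (hfg : Tendsto (fun a => f a - g a) l (𝓝 0)) :
    (fun a => exp (f a) - exp (g a)) =O[l] fun a => f a - g a := by
  have hexp : (fun a => exp (g a)) =O[l] fun _ => (1 : ℝ) :=
    ((continuous_exp.tendsto c).comp hg).isBigO_one ℝ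
  have hsub : (fun a => exp (f a - g a) - 1) =O[l] fun a => f a - g a := by
    simpa [Function.comp_def] using (exp_sub_sum_range_isBigO_pow 1).comp_tendsto hfg
  refine (hexp.mul hsub).congr (fun a => ?_) (fun a => one_mul _)
  rw [mul_sub, ← exp_add, add_sub_cancel, mul_one]

noncomputable section

def logStirlingApprox (x : ℝ) : ℝ := x * log x - x + log (2 * π * x) / 2

def logStirlingError (x : ℝ) : ℝ := log (Gamma (x + 1)) - logStirlingApprox x

def stirlingSeries (x : ℝ) : ℝ := 1 / (12 * x) - 1 / (360 * x ^ 3) + 1 / (1260 * x ^ 5)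

end

theorem Gamma_add_one_div_eq_exp_logStirlingError {x : ℝ} (hx : 0 < x) :
    Gamma (x + 1) / ((x / exp 1) ^ x * √(2 * π * x)) = exp (logStirlingError x) := by
  have hpow : (x / exp 1) ^ x = exp ((log x - 1) * x) := by
    rw [rpow_def_of_pos (by positivity), log_div hx.ne' (exp_ne_zero 1), log_exp]
  have hsqrt : √(2 * π * x) = exp (log (2 * π * x) / 2) := by
    rw [← log_sqrt (by positivity), exp_log (by positivity)]
  rw [logStirlingError, logStirlingApprox, exp_sub, exp_log (Gamma_pos_of_pos (by linarith)),
    hpow, hsqrt, ← exp_add]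
  ring_nf

theorem logStirlingError_sub_logStirlingError_add_one {x : ℝ} (hx : 0 < x) :
    logStirlingError x - logStirlingError (x + 1) = (x + 1 / 2) * (log (x + 1) - log x) - 1 := by
  have hx1 : 0 < x + 1 := by linarith
  have h2π : 0 < 2 * π := by positivity
  simp only [logStirlingError, logStirlingApprox]
  rw [Gamma_add_one hx1.ne', log_mul hx1.ne' (Gamma_pos_of_pos hx1).ne',
    log_mul h2π.ne' hx.ne', log_mul h2π.ne' hx1.ne']
  ring

theorem logStirlingError_natCast {n : ℕ} (hn : n ≠ 0) :
    logStirlingError n = log (Stirling.stirlingSeq n / √π) := by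
  have hn0 : (0 : ℝ) < n := by positivity
  rw [Stirling.stirlingSeq, log_div (by positivity) (by positivity),
    log_div (by positivity) (by positivity), log_mul (by positivity) (by positivity), log_pow,
    log_div hn0.ne' (exp_ne_zero 1), log_exp, log_sqrt (by positivity), log_sqrt pi_pos.le,
    logStirlingError, logStirlingApprox, Gamma_nat_eq_factorial, mul_comm 2 π, mul_assoc,
    log_mul pi_pos.ne' (by positivity)]
  ring

theorem tendsto_logStirlingError_natCast :
    Tendsto (fun n : ℕ => logStirlingError n) atTop (𝓝 0) := by
  have hlim : Tendsto (fun n : ℕ => Stirling.stirlingSeq n / √π) atTop (𝓝 1) := by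
    simpa [div_self (sqrt_pos.mpr pi_pos).ne'] using
      Stirling.tendsto_stirlingSeq_sqrt_pi.div_const √π
  have hlog := hlim.log one_ne_zero
  rw [log_one] at hlog
  refine hlog.congr' ?_
  filter_upwards [eventually_ne_atTop 0] with n hn
  exact (logStirlingError_natCast hn).symm

theorem tendsto_logStirlingApprox_add_sub (x : ℝ) :
    Tendsto (fun y => logStirlingApprox (x + y) - logStirlingApprox y - x * log y) atTop (𝓝 0) := by
  have hlog : Tendsto (fun y : ℝ => log (1 + x / y)) atTop (𝓝 0) := by
    have h : Tendsto (fun y : ℝ => 1 + x / y) atTop (𝓝 1) := by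
      simpa using (tendsto_const_nhds (x := x)).div_atTop tendsto_id |>.const_add 1
    simpa using h.log one_ne_zero
  have hlim := ((tendsto_mul_log_one_add_div_atTop x).sub_const x).add (hlog.const_mul (x + 1 / 2))
  rw [sub_self, zero_add, mul_zero] at hlim
  refine hlim.congr' ?_
  filter_upwards [eventually_gt_atTop 0, eventually_gt_atTop (-x)] with y hy hxy
  have hquot : log (x + y) = log y + log (1 + x / y) := by
    have h1 : 0 < 1 + x / y := by
      rw [one_add_div hy.ne']
      exact div_pos (by linarith) hy
    rw [← log_mul hy.ne' h1.ne', mul_add, mul_one, mul_div_cancel₀ _ hy.ne', add_comm]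
  have h2π : 0 < 2 * π := by positivity
  simp only [logStirlingApprox]
  rw [log_mul h2π.ne' hy.ne', log_mul h2π.ne' (by linarith), hquot]
  ring

theorem log_Gamma_add_natCast_add_one {x : ℝ} (hx : 0 < x) (n : ℕ) :
    log (Gamma (x + n + 1)) =
      log (Gamma x) - BohrMollerup.logGammaSeq x n + x * log n + log (Gamma (n + 1)) := by
  have hfeq : ∀ {y : ℝ}, 0 < y → (log ∘ Gamma) (y + 1) = (log ∘ Gamma) y + log y := fun hy => by
    simp only [Function.comp_apply]
    rw [Gamma_add_one hy.ne', log_mul hy.ne' (Gamma_pos_of_pos hy).ne', add_comm]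
  have h := BohrMollerup.f_add_nat_eq hfeq hx (n + 1)
  simp only [Function.comp_apply, Nat.cast_add, Nat.cast_one, ← add_assoc] at h
  rw [h, BohrMollerup.logGammaSeq, Gamma_nat_eq_factorial]
  ring

theorem tendsto_logStirlingError_add_natCast {x : ℝ} (hx : 0 < x) :
    Tendsto (fun n : ℕ => logStirlingError (x + n)) atTop (𝓝 0) := by
  have hlim := ((BohrMollerup.tendsto_log_gamma hx).const_sub (log (Gamma x))).add
    tendsto_logStirlingError_natCast |>.sub
    ((tendsto_logStirlingApprox_add_sub x).comp tendsto_natCast_atTop_atTop)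
  rw [sub_self, zero_add, sub_zero] at hlim
  refine hlim.congr fun n => ?_
  simp only [Function.comp_apply, logStirlingError, log_Gamma_add_natCast_add_one hx]
  ring

theorem abs_logSeries_step_sub_stirlingSeries_le {x : ℝ} (hx : 1 ≤ x) :
    |(x + 1 / 2) * ∑ i ∈ range 8, (x + 1)⁻¹ ^ (i + 1) / (i + 1) - 1 -
        (stirlingSeries x - stirlingSeries (x + 1))| ≤ 1 / (4 * (x + 1) ^ 8) := by
  have hx0 : 0 < x := by linarith
  have hx1 : 0 < x + 1 := by linarith
  set M := 1 / 1260 + 2 / 315 * x + 7 / 360 * x ^ 2 + 1 / 45 * x ^ 3 + 11 / 180 * x ^ 4 +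
    83 / 720 * x ^ 5 with hM
  have hM_le : M ≤ x ^ 5 / 4 := by
    rw [hM]
    linarith [pow_le_pow_right₀ hx (show 4 ≤ 5 by norm_num), pow_le_pow_right₀ hx
      (show 3 ≤ 5 by norm_num), pow_le_pow_right₀ hx (show 2 ≤ 5 by norm_num),
      pow_le_pow_right₀ hx (show 1 ≤ 5 by norm_num), one_le_pow₀ (n := 5) hx]
  have hid : (x + 1 / 2) * ∑ i ∈ range 8, (x + 1)⁻¹ ^ (i + 1) / (i + 1) - 1 -
      (stirlingSeries x - stirlingSeries (x + 1)) = -(M / (x ^ 5 * (x + 1) ^ 8)) := by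
    simp only [sum_range_succ, sum_range_zero, stirlingSeries, hM, inv_pow]
    field_simp
    ring
  rw [hid, abs_neg, abs_of_nonneg (by positivity), div_le_div_iff₀ (by positivity) (by positivity)]
  nlinarith [pow_pos hx1 8, pow_pos hx0 5]

theorem abs_log_step_sub_stirlingSeries_le {x : ℝ} (hx : 1 ≤ x) :
    |(x + 1 / 2) * (log (x + 1) - log x) - 1 - (stirlingSeries x - stirlingSeries (x + 1))| ≤
      7 / (4 * (x + 1) ^ 8) := by
  have hx0 : 0 < x := by linarith
  set S := ∑ i ∈ range 8, (x + 1)⁻¹ ^ (i + 1) / (i + 1)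
  have hlog : (x + 1 / 2) * |log (x + 1) - log x - S| ≤ 3 / (2 * (x + 1) ^ 8) :=
    calc (x + 1 / 2) * |log (x + 1) - log x - S|
        ≤ (x + 1 / 2) * (1 / (x * (x + 1) ^ 8)) := by
          gcongr
          exact abs_log_add_one_sub_log_sub_sum_le hx0 8
      _ ≤ 3 / (2 * (x + 1) ^ 8) := by
          rw [mul_one_div, div_le_div_iff₀ (by positivity) (by positivity)]
          nlinarith [pow_pos (show 0 < x + 1 by linarith) 8]
  calc _ = |((x + 1 / 2) * S - 1 - (stirlingSeries x - stirlingSeries (x + 1))) +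
        (x + 1 / 2) * (log (x + 1) - log x - S)| := by ring_nf
    _ ≤ 1 / (4 * (x + 1) ^ 8) + 3 / (2 * (x + 1) ^ 8) := by
        refine (abs_add_le _ _).trans (add_le_add (abs_logSeries_step_sub_stirlingSeries_le hx) ?_)
        rwa [abs_mul, abs_of_pos (by linarith)]
    _ = 7 / (4 * (x + 1) ^ 8) := by field_simp; ring

theorem abs_stirlingSeries_le {x : ℝ} (hx : 1 ≤ x) : |stirlingSeries x| ≤ x⁻¹ := by
  have hx0 : 0 < x := by linarith
  have hform : stirlingSeries x = (210 * x ^ 4 - 7 * x ^ 2 + 2) / (2520 * x ^ 5) := by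
    rw [stirlingSeries]; field_simp; ring
  have hx2 : 1 ≤ x ^ 2 := one_le_pow₀ hx
  rw [hform, abs_of_nonneg (div_nonneg (by nlinarith) (by positivity)),
    div_le_iff₀ (by positivity)]
  field_simp
  nlinarith

theorem stirlingSeries_isBigO : stirlingSeries =O[atTop] fun x => x⁻¹ :=
  IsBigO.of_bound 1 <| (eventually_ge_atTop 1).mono fun x hx => by
    simpa [abs_of_pos (show (0 : ℝ) < x by linarith)] using abs_stirlingSeries_le hx

theorem tendsto_stirlingSeries : Tendsto stirlingSeries atTop (𝓝 0) :=
  stirlingSeries_isBigO.trans_tendsto tendsto_inv_atTop_zero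

theorem abs_logStirlingError_sub_stirlingSeries_le {x : ℝ} (hx : 1 ≤ x) :
    |logStirlingError x - stirlingSeries x| ≤ 1 / (4 * x ^ 7) := by
  have hx0 : 0 < x := by linarith
  refine abs_le_of_tendsto_add_natCast (g := fun y => logStirlingError y - stirlingSeries y)
    (b := fun k => 7 / (4 * (x + k + 1) ^ 8)) ?_ (fun k => ?_) (fun n => ?_)
  · simpa using (tendsto_logStirlingError_add_natCast hx0).sub
      (tendsto_stirlingSeries.comp
        (tendsto_atTop_add_const_left atTop x tendsto_natCast_atTop_atTop))
  · have hxk : 1 ≤ x + k := le_add_of_le_of_nonneg hx k.cast_nonneg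
    rw [sub_sub_sub_comm, logStirlingError_sub_logStirlingError_add_one (by linarith)]
    exact abs_log_step_sub_stirlingSeries_le hxk
  · calc ∑ k ∈ range n, 7 / (4 * (x + k + 1) ^ 8)
        = (7 * ∑ k ∈ range n, 1 / (x + k + 1) ^ (7 + 1)) / 4 := by
          rw [mul_sum, sum_div]; congr 1; ext k; field_simp
      _ ≤ 1 / x ^ 7 / 4 := by gcongr; exact_mod_cast natCast_mul_sum_range_le hx0 7 n
      _ = 1 / (4 * x ^ 7) := by ring

theorem logStirlingError_sub_stirlingSeries_isBigO :
    (fun x => logStirlingError x - stirlingSeries x) =O[atTop] fun x => x⁻¹ ^ 7 :=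
  IsBigO.of_bound (1 / 4) <| (eventually_ge_atTop 1).mono fun x hx => by
    have hx0 : 0 < x := by linarith
    rw [norm_eq_abs, norm_of_nonneg (by positivity), inv_pow, ← div_eq_mul_inv, div_div]
    exact abs_logStirlingError_sub_stirlingSeries_le hx

theorem isBigO_exp_stirlingSeries_sub_sum_range :
    (fun x => exp (stirlingSeries x) - ∑ m ∈ range 6, stirlingSeries x ^ m / m.factorial)
      =O[atTop] fun x => x⁻¹ ^ 6 :=
  ((exp_sub_sum_range_isBigO_pow 6).comp_tendsto tendsto_stirlingSeries).trans
    (stirlingSeries_isBigO.pow 6)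

theorem isBigO_sum_range_stirlingSeries_sub :
    (fun x => ∑ m ∈ range 6, stirlingSeries x ^ m / m.factorial -
        (1 + 1 / (12 * x) + 1 / (288 * x ^ 2) - 139 / (51840 * x ^ 3) -
          571 / (2488320 * x ^ 4) + 163879 / (209018880 * x ^ 5)))
      =O[atTop] fun x => x⁻¹ ^ 6 := by
  -- the difference is `x⁻¹ ^ 6 * Q x⁻¹`, a polynomial in `x⁻¹` without terms of degree below six
  set Q : ℝ → ℝ := fun u =>
    9109 / 130636800 + 19261 / 6270566400 * u - 221 / 104509440 * u ^ 2
      - 17431 / 94058496000 * u ^ 3 + 50531 / 164602368000 * u ^ 4 + 114887 / 3950456832000 * u ^ 5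
      + 26689 / 19752284160000 * u ^ 6 - 197591 / 237027409920000 * u ^ 7
      - 187 / 2469035520000 * u ^ 8 + 19920857 / 248878780416000000 * u ^ 9
      + 47 / 5761082880000 * u ^ 10 + 9769 / 24887878041600000 * u ^ 11 - 1 / 4320812160000 * u ^ 12
      - 127 / 6221969510400000 * u ^ 13 + 1 / 60491370240000 * u ^ 14
      + 37 / 21776893286400000 * u ^ 15 - 1 / 21776893286400000 * u ^ 17
      + 1 / 381095632512000000 * u ^ 19
  have hQ : (fun x : ℝ => Q x⁻¹) =O[atTop] fun _ => (1 : ℝ) :=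
    (((show Continuous Q by fun_prop).tendsto 0).comp tendsto_inv_atTop_zero).isBigO_one ℝ
  refine ((isBigO_refl (fun x : ℝ => x⁻¹ ^ 6) atTop).mul hQ).congr' ?_ (by simp)
  filter_upwards [eventually_ne_atTop 0] with x hx
  set u := x⁻¹ with hu
  have hxu : x = u⁻¹ := by rw [hu, inv_inv]
  simp only [sum_range_succ, sum_range_zero, stirlingSeries, Nat.factorial, hxu]
  field_simp
  ring

theorem stmt_19 :
    (fun s : ℝ =>
        Real.Gamma (s + 1) / ((s / Real.exp 1) ^ s * Real.sqrt (2 * Real.pi * s)) -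
          (1 + 1 / (12 * s) + 1 / (288 * s ^ 2) - 139 / (51840 * s ^ 3) -
            571 / (2488320 * s ^ 4) + 163879 / (209018880 * s ^ 5)))
      =o[Filter.atTop] fun s : ℝ => 1 / s ^ 5 := by
  have hinv : ∀ {m n : ℕ}, m < n → (fun x : ℝ => x⁻¹ ^ n) =o[atTop] fun x => x⁻¹ ^ m :=
    fun h => (isLittleO_pow_pow h).comp_tendsto tendsto_inv_atTop_zero
  have herr := logStirlingError_sub_stirlingSeries_isBigO
  have hexp : (fun x => exp (logStirlingError x) - exp (stirlingSeries x)) =O[atTop]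
      fun x => x⁻¹ ^ 6 :=
    (isBigO_exp_sub_exp tendsto_stirlingSeries
      (herr.trans_tendsto (by simpa using (tendsto_inv_atTop_zero (𝕜 := ℝ)).pow 7))).trans
      (herr.trans (hinv (by norm_num)).isBigO)
  have hsum := (hexp.add isBigO_exp_stirlingSeries_sub_sum_range).add
    isBigO_sum_range_stirlingSeries_sub
  refine (hsum.trans_isLittleO (hinv (by norm_num : 5 < 6))).congr' ?_ (by simp)
  filter_upwards [eventually_gt_atTop 0] with x hx
  rw [Gamma_add_one_div_eq_exp_logStirlingError hx]
  ring
end
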